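/- (Fault handler correctness, allowed case.) Let 𝓡 be a rule table and φ_𝓡 = genFaultHandler 𝓡 the compiled fault handler. Suppose ⊢_𝓡 (L_pc, ℓ₁, ℓ₂, ℓ₃) ⇝_opcode ⟨L_rpc, L_r⟩ and the cache input part is κ_i = [opcode, Tag(L_pc), Tag(ℓ₁), Tag(ℓ₂), Tag(ℓ₃)]. Then from the kernel-mode state with cache (κ_i, κ_o), user memory μ, stack (pc, user); σ, and pc 0@T_D, the machine running φ_𝓡 executes entirely in kernel mode and reaches the user-mode state with cache (κ_i, (Tag(L_rpc), Tag(L_r))), memory μ, stack σ, and program counter pc. -/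

import Mathlib

/-! ### Generic machines, traces, refinement, observation, TINI -/

/-- A generic machine: states, events, inputs, a step relation (with optional
event; `none` is the silent action τ), and an initialization function. -/
structure Machine (S E I : Type) where
  step : S → Option E → S → Prop
  init : I → S

/-- `Traces step s t s'`: the machine runs from `s` to `s'` emitting the
(non-silent) events collected in the list `t`. -/
inductive Traces {S E : Type} (step : S → Option E → S → Prop) : S → List E → S → Prop
  | nil (s : S) : Traces step s [] s
  | event {s₁ s₂ s₃ : S} {e : E} {t : List E} :
      step s₁ (some e) s₂ → Traces step s₂ t s₃ → Traces step s₁ (e :: t) s₃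
  | silent {s₁ s₂ s₃ : S} {t : List E} :
      step s₁ none s₂ → Traces step s₂ t s₃ → Traces step s₁ t s₃

/-- `Emits step s t`: from `s` the machine can emit the trace `t`. -/
def Emits {S E : Type} (step : S → Option E → S → Prop) (s : S) (t : List E) : Prop :=
  ∃ s', Traces step s t s'

/-- Refinement of `M₁` into `M₂` via relations on inputs and events. -/
def Refinement {S₁ E₁ I₁ S₂ E₂ I₂ : Type} (M₁ : Machine S₁ E₁ I₁) (M₂ : Machine S₂ E₂ I₂)
    (Ri : I₁ → I₂ → Prop) (Re : E₁ → E₂ → Prop) : Prop :=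
  ∀ i₁ i₂ t₂, Ri i₁ i₂ → Emits M₂.step (M₂.init i₂) t₂ →
    ∃ t₁, Emits M₁.step (M₁.init i₁) t₁ ∧ List.Forall₂ Re t₁ t₂

/-- Refinement via states. -/
def StateRefinement {S₁ E₁ I₁ S₂ E₂ I₂ : Type} (M₁ : Machine S₁ E₁ I₁) (M₂ : Machine S₂ E₂ I₂)
    (Rs : S₁ → S₂ → Prop) (Re : E₁ → E₂ → Prop) : Prop :=
  ∀ s₁ s₂ t₂, Rs s₁ s₂ → Emits M₂.step s₂ t₂ →
    ∃ t₁, Emits M₁.step s₁ t₁ ∧ List.Forall₂ Re t₁ t₂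

open Classical in
/-- Filter the unobservable events out of a trace. -/
noncomputable def filterObs {E : Type} (obs : E → Prop) : List E → List E
  | [] => []
  | e :: t => if obs e then e :: filterObs obs t else filterObs obs t

/-- Indistinguishability of traces: pairwise equal up to the length of the shorter. -/
inductive IndistTrace {E : Type} : List E → List E → Prop
  | nilL (t : List E) : IndistTrace [] t
  | nilR (t : List E) : IndistTrace t []
  | cons (e : E) {t₁ t₂ : List E} : IndistTrace t₁ t₂ → IndistTrace (e :: t₁) (e :: t₂)

/-- Observability of actions: silent actions are never observable. -/
def ObsAct {E : Type} (obs : E → Prop) (α : Option E) : Prop :=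
  ∃ e, α = some e ∧ obs e

/-- Indistinguishability of actions: equal, or both unobservable. -/
def ActIndist {E : Type} (obs : E → Prop) (α₁ α₂ : Option E) : Prop :=
  α₁ = α₂ ∨ (¬ ObsAct obs α₁ ∧ ¬ ObsAct obs α₂)

/-- Indistinguishability of events: equal, or both unobservable. -/
def EvIndist {E : Type} (obs : E → Prop) (e₁ e₂ : E) : Prop :=
  e₁ = e₂ ∨ (¬ obs e₁ ∧ ¬ obs e₂)

/-- Termination-insensitive noninterference for a machine with a notion of
observation `(Ω, obsE, indistI)`. -/
def TINI {S E I Ω : Type} (M : Machine S E I)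
    (obsE : Ω → E → Prop) (indistI : Ω → I → I → Prop) : Prop :=
  ∀ o i₁ i₂ t₁ t₂, indistI o i₁ i₂ →
    Emits M.step (M.init i₁) t₁ → Emits M.step (M.init i₂) t₂ →
    IndistTrace (filterObs (obsE o) t₁) (filterObs (obsE o) t₂)

/-! ### The abstract IFC machine -/

/-- Labeled atoms: an integer payload together with an IFC label. -/
structure Atom (L : Type) where
  val : ℤ
  lab : L

/-- The instruction set (shared by all machines). -/
inductive Instr : Type where
  | add
  | push (m : ℤ)
  | load
  | store
  | jump
  | bnz (k : ℤ)
  | call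
  | ret
  | output

/-- Instruction memories. -/
abbrev InstrMem : Type := ℤ → Option Instr

/-- Stack elements: data atoms or return frames. -/
inductive StkElt (L : Type) : Type where
  | data : Atom L → StkElt L
  | ret : Atom L → StkElt L

/-- Abstract machine states: data memory, stack, program counter. -/
structure AState (L : Type) where
  mem : ℤ → Option (Atom L)
  stk : List (StkElt L)
  pc : Atom L

/-- Memory update. -/
def updMem {L : Type} (μ : ℤ → Option (Atom L)) (p : ℤ) (a : Atom L) :
    ℤ → Option (Atom L) :=
  fun q => if q = p then some a else μ q

section Abstract

variable {L : Type} [SemilatticeSup L] [OrderBot L]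

/-- The step relation of the abstract IFC machine, with fixed instruction
memory `ι`.  Actions are `Option (Atom L)`: `none` is silent, `some a` emits
the event `a`. -/
inductive AStep (ι : InstrMem) : AState L → Option (Atom L) → AState L → Prop
  | add {μ : ℤ → Option (Atom L)} {σ : List (StkElt L)} {n n₁ n₂ : ℤ} {Lpc L₁ L₂ : L} :
      ι n = some .add →
      AStep ι ⟨μ, .data ⟨n₁, L₁⟩ :: .data ⟨n₂, L₂⟩ :: σ, ⟨n, Lpc⟩⟩ none
              ⟨μ, .data ⟨n₁ + n₂, L₁ ⊔ L₂⟩ :: σ, ⟨n + 1, Lpc⟩⟩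
  | push {μ : ℤ → Option (Atom L)} {σ : List (StkElt L)} {n m : ℤ} {Lpc : L} :
      ι n = some (.push m) →
      AStep ι ⟨μ, σ, ⟨n, Lpc⟩⟩ none ⟨μ, .data ⟨m, ⊥⟩ :: σ, ⟨n + 1, Lpc⟩⟩
  | load {μ : ℤ → Option (Atom L)} {σ : List (StkElt L)} {n p m : ℤ} {Lpc L₁ L₂ : L} :
      ι n = some .load → μ p = some ⟨m, L₂⟩ →
      AStep ι ⟨μ, .data ⟨p, L₁⟩ :: σ, ⟨n, Lpc⟩⟩ none
              ⟨μ, .data ⟨m, L₁ ⊔ L₂⟩ :: σ, ⟨n + 1, Lpc⟩⟩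
  | store {μ : ℤ → Option (Atom L)} {σ : List (StkElt L)} {n p m k : ℤ}
      {Lpc L₁ L₂ L₃ : L} :
      ι n = some .store → μ p = some ⟨k, L₃⟩ → L₁ ⊔ Lpc ≤ L₃ →
      AStep ι ⟨μ, .data ⟨p, L₁⟩ :: .data ⟨m, L₂⟩ :: σ, ⟨n, Lpc⟩⟩ none
              ⟨updMem μ p ⟨m, L₁ ⊔ L₂ ⊔ Lpc⟩, σ, ⟨n + 1, Lpc⟩⟩
  | jump {μ : ℤ → Option (Atom L)} {σ : List (StkElt L)} {n n' : ℤ} {Lpc L₁ : L} :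
      ι n = some .jump →
      AStep ι ⟨μ, .data ⟨n', L₁⟩ :: σ, ⟨n, Lpc⟩⟩ none ⟨μ, σ, ⟨n', L₁ ⊔ Lpc⟩⟩
  | bnz {μ : ℤ → Option (Atom L)} {σ : List (StkElt L)} {n m k : ℤ} {Lpc L₁ : L} :
      ι n = some (.bnz k) →
      AStep ι ⟨μ, .data ⟨m, L₁⟩ :: σ, ⟨n, Lpc⟩⟩ none
              ⟨μ, σ, ⟨n + (if m = 0 then 1 else k), L₁ ⊔ Lpc⟩⟩
  | call {μ : ℤ → Option (Atom L)} {σ : List (StkElt L)} {n n' : ℤ} {Lpc L₁ : L} :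
      ι n = some .call →
      AStep ι ⟨μ, .data ⟨n', L₁⟩ :: σ, ⟨n, Lpc⟩⟩ none
              ⟨μ, .ret ⟨n + 1, Lpc⟩ :: σ, ⟨n', L₁ ⊔ Lpc⟩⟩
  | ret {μ : ℤ → Option (Atom L)} {σ : List (StkElt L)} {n : ℤ} {Lpc : L} {pc' : Atom L} :
      ι n = some .ret →
      AStep ι ⟨μ, .ret pc' :: σ, ⟨n, Lpc⟩⟩ none ⟨μ, σ, pc'⟩
  | output {μ : ℤ → Option (Atom L)} {σ : List (StkElt L)} {n m : ℤ} {Lpc L₁ : L} :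
      ι n = some .output →
      AStep ι ⟨μ, .data ⟨m, L₁⟩ :: σ, ⟨n, Lpc⟩⟩ (some ⟨m, L₁ ⊔ Lpc⟩)
              ⟨μ, σ, ⟨n + 1, Lpc⟩⟩

/-- Indistinguishability of atoms at observer `o`: equal, or both unobservable. -/
def AtomIndist (o : L) (a₁ a₂ : Atom L) : Prop :=
  a₁ = a₂ ∨ (¬ a₁.lab ≤ o ∧ ¬ a₂.lab ≤ o)

/-- Pointwise indistinguishability of memories. -/
def MemIndist (o : L) (μ₁ μ₂ : ℤ → Option (Atom L)) : Prop :=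
  ∀ p, Option.Rel (AtomIndist o) (μ₁ p) (μ₂ p)

/-- Indistinguishability of stack elements: data matches data, return frames
match return frames, componentwise. -/
inductive EltIndist (o : L) : StkElt L → StkElt L → Prop
  | data {a₁ a₂ : Atom L} : AtomIndist o a₁ a₂ → EltIndist o (.data a₁) (.data a₂)
  | ret {a₁ a₂ : Atom L} : AtomIndist o a₁ a₂ → EltIndist o (.ret a₁) (.ret a₂)

open Classical in
/-- Stack filtering: drop data atoms and unobservable return frames, keeping the
whole remaining stack at the first observable return frame. -/
noncomputable def stkFilter (o : L) : List (StkElt L) → List (StkElt L)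
  | [] => []
  | .data _ :: σ => stkFilter o σ
  | .ret a :: σ => if a.lab ≤ o then .ret a :: σ else stkFilter o σ

/-- A state is observable when the label of its pc flows to the observer. -/
def StateObs (o : L) (s : AState L) : Prop := s.pc.lab ≤ o

/-- Indistinguishability of abstract machine states. -/
def StateIndist (o : L) (s₁ s₂ : AState L) : Prop :=
  (s₁.pc.lab ≤ o ∧ s₂.pc.lab ≤ o ∧ s₁.pc = s₂.pc ∧
    List.Forall₂ (EltIndist o) s₁.stk s₂.stk ∧ MemIndist o s₁.mem s₂.mem) ∨
  (¬ s₁.pc.lab ≤ o ∧ ¬ s₂.pc.lab ≤ o ∧ MemIndist o s₁.mem s₂.mem ∧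
    List.Forall₂ (EltIndist o) (stkFilter o s₁.stk) (stkFilter o s₂.stk))

/-- Input data for the abstract machine: program, initial stack of atoms,
memory size, initial label. -/
structure AInput (L : Type) where
  prog : InstrMem
  args : List (Atom L)
  size : ℕ
  lab : L

/-- Initial state for the abstract machine: the program is loaded as the
instruction memory, the memory consists of `size` copies of `0 @ lab`, the
stack holds the arguments, and the pc is `0 @ lab`. -/
def aInit (i : AInput L) : InstrMem × AState L :=
  (i.prog,
   ⟨fun q => if 0 ≤ q ∧ q < (i.size : ℤ) then some ⟨0, i.lab⟩ else none,
    i.args.map .data, ⟨0, i.lab⟩⟩)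

/-- The abstract machine step relation as a generic machine step (the fixed
instruction memory is part of the state and is preserved). -/
def AStepP : (InstrMem × AState L) → Option (Atom L) → (InstrMem × AState L) → Prop :=
  fun s α s' => s'.1 = s.1 ∧ AStep s.1 s.2 α s'.2

/-- Indistinguishability of abstract inputs: same program, memory size and
initial label, pointwise indistinguishable argument lists. -/
def AInputIndist (o : L) (i₁ i₂ : AInput L) : Prop :=
  i₁.prog = i₂.prog ∧ i₁.size = i₂.size ∧ i₁.lab = i₂.lab ∧
  List.Forall₂ (AtomIndist o) i₁.args i₂.args

/-- The abstract IFC machine as a generic machine. -/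
def AMachine (L : Type) [SemilatticeSup L] [OrderBot L] :
    Machine (InstrMem × AState L) (Atom L) (AInput L) :=
  ⟨AStepP, aInit⟩

end Abstract

/-! ### The symbolic IFC rule machine -/

/-- Instruction opcodes. -/
inductive Opcode : Type where
  | add | push | load | store | jump | bnz | call | ret | output
deriving DecidableEq

/-- Label expressions of the symbolic IFC rule DSL. -/
inductive LExpr : Type where
  | bot
  | labPC
  | lab1
  | lab2
  | lab3
  | join : LExpr → LExpr → LExpr

/-- Boolean expressions of the symbolic IFC rule DSL. -/
inductive BExpr : Type where
  | tru
  | flows : LExpr → LExpr → BExpr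

/-- A symbolic IFC rule: an allow condition, an expression for the label of the
next pc, and an expression for the label of the result. -/
structure SRule : Type where
  allow : BExpr
  rpc : LExpr
  res : LExpr

/-- A symbolic IFC rule table assigns a rule to every opcode. -/
abbrev RuleTable : Type := Opcode → SRule

section Symbolic

variable {L : Type} [SemilatticeSup L] [OrderBot L]

/-- Evaluation of label expressions at an input tuple `ρ = (L_pc, ℓ₁, ℓ₂, ℓ₃)`. -/
def evalL (ρ : L × L × L × L) : LExpr → L
  | .bot => ⊥
  | .labPC => ρ.1
  | .lab1 => ρ.2.1
  | .lab2 => ρ.2.2.1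
  | .lab3 => ρ.2.2.2
  | .join e₁ e₂ => evalL ρ e₁ ⊔ evalL ρ e₂

/-- Evaluation of boolean expressions. -/
def evalB (ρ : L × L × L × L) : BExpr → Prop
  | .tru => True
  | .flows e₁ e₂ => evalL ρ e₁ ≤ evalL ρ e₂

/-- The IFC enforcement judgment `⊢_𝓡 ρ ⇝_op ⟨L_rpc, L_r⟩`. -/
def Judge (R : RuleTable) (ρ : L × L × L × L) (op : Opcode) (Lrpc Lr : L) : Prop :=
  evalB ρ (R op).allow ∧ evalL ρ (R op).rpc = Lrpc ∧ evalL ρ (R op).res = Lr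

/-- The step relation of the symbolic rule machine, parameterized by a rule
table `R` and a fixed instruction memory `ι`. -/
inductive QStep (R : RuleTable) (ι : InstrMem) :
    AState L → Option (Atom L) → AState L → Prop
  | add {μ : ℤ → Option (Atom L)} {σ : List (StkElt L)} {n n₁ n₂ : ℤ}
      {Lpc L₁ L₂ Lrpc Lr : L} :
      ι n = some .add → Judge R (Lpc, L₁, L₂, ⊥) .add Lrpc Lr →
      QStep R ι ⟨μ, .data ⟨n₁, L₁⟩ :: .data ⟨n₂, L₂⟩ :: σ, ⟨n, Lpc⟩⟩ none
                ⟨μ, .data ⟨n₁ + n₂, Lr⟩ :: σ, ⟨n + 1, Lrpc⟩⟩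
  | push {μ : ℤ → Option (Atom L)} {σ : List (StkElt L)} {n m : ℤ} {Lpc Lrpc Lr : L} :
      ι n = some (.push m) → Judge R (Lpc, ⊥, ⊥, ⊥) .push Lrpc Lr →
      QStep R ι ⟨μ, σ, ⟨n, Lpc⟩⟩ none ⟨μ, .data ⟨m, Lr⟩ :: σ, ⟨n + 1, Lrpc⟩⟩
  | load {μ : ℤ → Option (Atom L)} {σ : List (StkElt L)} {n p m : ℤ}
      {Lpc L₁ L₂ Lrpc Lr : L} :
      ι n = some .load → μ p = some ⟨m, L₂⟩ →
      Judge R (Lpc, L₁, L₂, ⊥) .load Lrpc Lr →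
      QStep R ι ⟨μ, .data ⟨p, L₁⟩ :: σ, ⟨n, Lpc⟩⟩ none
                ⟨μ, .data ⟨m, Lr⟩ :: σ, ⟨n + 1, Lrpc⟩⟩
  | store {μ : ℤ → Option (Atom L)} {σ : List (StkElt L)} {n p m k : ℤ}
      {Lpc L₁ L₂ L₃ Lrpc Lr : L} :
      ι n = some .store → μ p = some ⟨k, L₃⟩ →
      Judge R (Lpc, L₁, L₂, L₃) .store Lrpc Lr →
      QStep R ι ⟨μ, .data ⟨p, L₁⟩ :: .data ⟨m, L₂⟩ :: σ, ⟨n, Lpc⟩⟩ none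
                ⟨updMem μ p ⟨m, Lr⟩, σ, ⟨n + 1, Lrpc⟩⟩
  | jump {μ : ℤ → Option (Atom L)} {σ : List (StkElt L)} {n n' : ℤ}
      {Lpc L₁ Lrpc Lr : L} :
      ι n = some .jump → Judge R (Lpc, L₁, ⊥, ⊥) .jump Lrpc Lr →
      QStep R ι ⟨μ, .data ⟨n', L₁⟩ :: σ, ⟨n, Lpc⟩⟩ none ⟨μ, σ, ⟨n', Lrpc⟩⟩
  | bnz {μ : ℤ → Option (Atom L)} {σ : List (StkElt L)} {n m k : ℤ}
      {Lpc L₁ Lrpc Lr : L} :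
      ι n = some (.bnz k) → Judge R (Lpc, L₁, ⊥, ⊥) .bnz Lrpc Lr →
      QStep R ι ⟨μ, .data ⟨m, L₁⟩ :: σ, ⟨n, Lpc⟩⟩ none
                ⟨μ, σ, ⟨n + (if m = 0 then 1 else k), Lrpc⟩⟩
  | call {μ : ℤ → Option (Atom L)} {σ : List (StkElt L)} {n n' : ℤ}
      {Lpc L₁ Lrpc Lr : L} :
      ι n = some .call → Judge R (Lpc, L₁, ⊥, ⊥) .call Lrpc Lr →
      QStep R ι ⟨μ, .data ⟨n', L₁⟩ :: σ, ⟨n, Lpc⟩⟩ none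
                ⟨μ, .ret ⟨n + 1, Lr⟩ :: σ, ⟨n', Lrpc⟩⟩
  | ret {μ : ℤ → Option (Atom L)} {σ : List (StkElt L)} {n m : ℤ}
      {Lpc L₁ Lrpc Lr : L} :
      ι n = some .ret → Judge R (Lpc, L₁, ⊥, ⊥) .ret Lrpc Lr →
      QStep R ι ⟨μ, .ret ⟨m, L₁⟩ :: σ, ⟨n, Lpc⟩⟩ none ⟨μ, σ, ⟨m, Lrpc⟩⟩
  | output {μ : ℤ → Option (Atom L)} {σ : List (StkElt L)} {n m : ℤ}
      {Lpc L₁ Lrpc Lr : L} :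
      ι n = some .output → Judge R (Lpc, L₁, ⊥, ⊥) .output Lrpc Lr →
      QStep R ι ⟨μ, .data ⟨m, L₁⟩ :: σ, ⟨n, Lpc⟩⟩ (some ⟨m, Lr⟩)
                ⟨μ, σ, ⟨n + 1, Lrpc⟩⟩

/-- The symbolic rule machine step relation as a generic machine step (the
instruction memory is part of the state and preserved). -/
def QStepP (R : RuleTable) :
    (InstrMem × AState L) → Option (Atom L) → (InstrMem × AState L) → Prop :=
  fun s α s' => s'.1 = s.1 ∧ QStep R s.1 s.2 α s'.2

end Symbolic

/-- The rule table `𝓡^abs` corresponding to the IFC mechanism of the abstract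
machine. -/
def RabsTable : RuleTable
  | .add => ⟨.tru, .labPC, .join .lab1 .lab2⟩
  | .output => ⟨.tru, .labPC, .join .lab1 .labPC⟩
  | .push => ⟨.tru, .labPC, .bot⟩
  | .load => ⟨.tru, .labPC, .join .lab1 .lab2⟩
  | .store => ⟨.flows (.join .lab1 .labPC) .lab3, .labPC, .join (.join .lab1 .lab2) .labPC⟩
  | .jump => ⟨.tru, .join .lab1 .labPC, .bot⟩
  | .bnz => ⟨.tru, .join .lab1 .labPC, .bot⟩
  | .call => ⟨.tru, .join .lab1 .labPC, .labPC⟩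
  | .ret => ⟨.tru, .lab1, .bot⟩

/-! ### The concrete machine -/

/-- The default tag. -/
def TD : ℤ := -1

/-- Concrete atoms: an integer payload and an integer tag. -/
structure CAtom : Type where
  val : ℤ
  tag : ℤ
deriving DecidableEq

/-- Concrete stack elements: data atoms, or return frames saving a pc atom and
a privilege bit (`true` = kernel mode). -/
inductive CStkElt : Type where
  | data : CAtom → CStkElt
  | ret : CAtom → Bool → CStkElt

/-- Concrete machine states: privilege bit (`true` = kernel), kernel data
memory (whose first seven cells form the rule cache), user data memory, stack,
and pc. -/
structure CState : Type where
  priv : Bool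
  kmem : ℤ → Option CAtom
  umem : ℤ → Option CAtom
  stk : List CStkElt
  pc : CAtom

/-- Concrete memory update. -/
def updC (μ : ℤ → Option CAtom) (p : ℤ) (a : CAtom) : ℤ → Option CAtom :=
  fun q => if q = p then some a else μ q

/-- Integer encoding of opcodes. -/
def encOp : Opcode → ℤ
  | .add => 0 | .push => 1 | .load => 2 | .store => 3 | .jump => 4
  | .bnz => 5 | .call => 6 | .ret => 7 | .output => 8

/-- The input part of the rule cache holds the given opcode and tags. -/
def cacheIn (κ : ℤ → Option CAtom) (op Tpc T₁ T₂ T₃ : ℤ) : Prop :=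
  κ 0 = some ⟨op, TD⟩ ∧ κ 1 = some ⟨Tpc, TD⟩ ∧ κ 2 = some ⟨T₁, TD⟩ ∧
  κ 3 = some ⟨T₂, TD⟩ ∧ κ 4 = some ⟨T₃, TD⟩

/-- The output part of the rule cache holds the given result tags. -/
def cacheOut (κ : ℤ → Option CAtom) (Trpc Tr : ℤ) : Prop :=
  κ 5 = some ⟨Trpc, TD⟩ ∧ κ 6 = some ⟨Tr, TD⟩

/-- Install a faulting instruction's opcode and tags in the cache input part,
resetting the output part to default tags. -/
def installCache (κ : ℤ → Option CAtom) (op Tpc T₁ T₂ T₃ : ℤ) : ℤ → Option CAtom :=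
  fun q =>
    if q = 0 then some ⟨op, TD⟩ else if q = 1 then some ⟨Tpc, TD⟩
    else if q = 2 then some ⟨T₁, TD⟩ else if q = 3 then some ⟨T₂, TD⟩
    else if q = 4 then some ⟨T₃, TD⟩ else if q = 5 then some ⟨TD, TD⟩
    else if q = 6 then some ⟨TD, TD⟩ else κ q

/-- The step relation of the concrete machine, given a user instruction memory
`ι` and a kernel instruction memory `φ`.  In user mode (`priv = false`) an
instruction either hits in the rule cache and executes with the cached output
tags, or misses, stores its opcode and tags in the cache input, pushes a return
frame, and traps to kernel address 0.  In kernel mode (`priv = true`)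
instructions are fetched from `φ`, tags are ignored (`Load`/`Store` preserve the
tag of the datum), `Output` is forbidden, and `Ret` restores the saved pc and
privilege bit. -/
inductive CStep (ι φ : InstrMem) : CState → Option CAtom → CState → Prop
  -- user mode, cache hit
  | addH {κ μ : ℤ → Option CAtom} {σ : List CStkElt} {n n₁ n₂ Tpc T₁ T₂ Trpc Tr : ℤ} :
      ι n = some .add → cacheIn κ (encOp .add) Tpc T₁ T₂ TD → cacheOut κ Trpc Tr →
      CStep ι φ ⟨false, κ, μ, .data ⟨n₁, T₁⟩ :: .data ⟨n₂, T₂⟩ :: σ, ⟨n, Tpc⟩⟩ none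
                ⟨false, κ, μ, .data ⟨n₁ + n₂, Tr⟩ :: σ, ⟨n + 1, Trpc⟩⟩
  | pushH {κ μ : ℤ → Option CAtom} {σ : List CStkElt} {n m Tpc Trpc Tr : ℤ} :
      ι n = some (.push m) → cacheIn κ (encOp .push) Tpc TD TD TD → cacheOut κ Trpc Tr →
      CStep ι φ ⟨false, κ, μ, σ, ⟨n, Tpc⟩⟩ none
                ⟨false, κ, μ, .data ⟨m, Tr⟩ :: σ, ⟨n + 1, Trpc⟩⟩
  | loadH {κ μ : ℤ → Option CAtom} {σ : List CStkElt} {n p m Tpc T₁ T₂ Trpc Tr : ℤ} :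
      ι n = some .load → μ p = some ⟨m, T₂⟩ →
      cacheIn κ (encOp .load) Tpc T₁ T₂ TD → cacheOut κ Trpc Tr →
      CStep ι φ ⟨false, κ, μ, .data ⟨p, T₁⟩ :: σ, ⟨n, Tpc⟩⟩ none
                ⟨false, κ, μ, .data ⟨m, Tr⟩ :: σ, ⟨n + 1, Trpc⟩⟩
  | storeH {κ μ : ℤ → Option CAtom} {σ : List CStkElt} {n p m k Tpc T₁ T₂ T₃ Trpc Tr : ℤ} :
      ι n = some .store → μ p = some ⟨k, T₃⟩ →
      cacheIn κ (encOp .store) Tpc T₁ T₂ T₃ → cacheOut κ Trpc Tr →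
      CStep ι φ ⟨false, κ, μ, .data ⟨p, T₁⟩ :: .data ⟨m, T₂⟩ :: σ, ⟨n, Tpc⟩⟩ none
                ⟨false, κ, updC μ p ⟨m, Tr⟩, σ, ⟨n + 1, Trpc⟩⟩
  | jumpH {κ μ : ℤ → Option CAtom} {σ : List CStkElt} {n n' Tpc T₁ Trpc Tr : ℤ} :
      ι n = some .jump → cacheIn κ (encOp .jump) Tpc T₁ TD TD → cacheOut κ Trpc Tr →
      CStep ι φ ⟨false, κ, μ, .data ⟨n', T₁⟩ :: σ, ⟨n, Tpc⟩⟩ none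
                ⟨false, κ, μ, σ, ⟨n', Trpc⟩⟩
  | bnzH {κ μ : ℤ → Option CAtom} {σ : List CStkElt} {n m k Tpc T₁ Trpc Tr : ℤ} :
      ι n = some (.bnz k) → cacheIn κ (encOp .bnz) Tpc T₁ TD TD → cacheOut κ Trpc Tr →
      CStep ι φ ⟨false, κ, μ, .data ⟨m, T₁⟩ :: σ, ⟨n, Tpc⟩⟩ none
                ⟨false, κ, μ, σ, ⟨n + (if m = 0 then 1 else k), Trpc⟩⟩
  | callH {κ μ : ℤ → Option CAtom} {σ : List CStkElt} {n n' Tpc T₁ Trpc Tr : ℤ} :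
      ι n = some .call → cacheIn κ (encOp .call) Tpc T₁ TD TD → cacheOut κ Trpc Tr →
      CStep ι φ ⟨false, κ, μ, .data ⟨n', T₁⟩ :: σ, ⟨n, Tpc⟩⟩ none
                ⟨false, κ, μ, .ret ⟨n + 1, Tr⟩ false :: σ, ⟨n', Trpc⟩⟩
  | retH {κ μ : ℤ → Option CAtom} {σ : List CStkElt} {n m Tpc T₁ Trpc Tr : ℤ} :
      ι n = some .ret → cacheIn κ (encOp .ret) Tpc T₁ TD TD → cacheOut κ Trpc Tr →
      CStep ι φ ⟨false, κ, μ, .ret ⟨m, T₁⟩ false :: σ, ⟨n, Tpc⟩⟩ none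
                ⟨false, κ, μ, σ, ⟨m, Trpc⟩⟩
  | outputH {κ μ : ℤ → Option CAtom} {σ : List CStkElt} {n m Tpc T₁ Trpc Tr : ℤ} :
      ι n = some .output → cacheIn κ (encOp .output) Tpc T₁ TD TD → cacheOut κ Trpc Tr →
      CStep ι φ ⟨false, κ, μ, .data ⟨m, T₁⟩ :: σ, ⟨n, Tpc⟩⟩ (some ⟨m, Tr⟩)
                ⟨false, κ, μ, σ, ⟨n + 1, Trpc⟩⟩
  -- user mode, cache miss
  | addM {κ μ : ℤ → Option CAtom} {σ : List CStkElt} {n n₁ n₂ Tpc T₁ T₂ : ℤ} :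
      ι n = some .add → ¬ cacheIn κ (encOp .add) Tpc T₁ T₂ TD →
      CStep ι φ ⟨false, κ, μ, .data ⟨n₁, T₁⟩ :: .data ⟨n₂, T₂⟩ :: σ, ⟨n, Tpc⟩⟩ none
                ⟨true, installCache κ (encOp .add) Tpc T₁ T₂ TD, μ,
                 .ret ⟨n, Tpc⟩ false :: .data ⟨n₁, T₁⟩ :: .data ⟨n₂, T₂⟩ :: σ, ⟨0, TD⟩⟩
  | pushM {κ μ : ℤ → Option CAtom} {σ : List CStkElt} {n m Tpc : ℤ} :
      ι n = some (.push m) → ¬ cacheIn κ (encOp .push) Tpc TD TD TD →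
      CStep ι φ ⟨false, κ, μ, σ, ⟨n, Tpc⟩⟩ none
                ⟨true, installCache κ (encOp .push) Tpc TD TD TD, μ,
                 .ret ⟨n, Tpc⟩ false :: σ, ⟨0, TD⟩⟩
  | loadM {κ μ : ℤ → Option CAtom} {σ : List CStkElt} {n p m Tpc T₁ T₂ : ℤ} :
      ι n = some .load → μ p = some ⟨m, T₂⟩ →
      ¬ cacheIn κ (encOp .load) Tpc T₁ T₂ TD →
      CStep ι φ ⟨false, κ, μ, .data ⟨p, T₁⟩ :: σ, ⟨n, Tpc⟩⟩ none
                ⟨true, installCache κ (encOp .load) Tpc T₁ T₂ TD, μ,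
                 .ret ⟨n, Tpc⟩ false :: .data ⟨p, T₁⟩ :: σ, ⟨0, TD⟩⟩
  | storeM {κ μ : ℤ → Option CAtom} {σ : List CStkElt} {n p m k Tpc T₁ T₂ T₃ : ℤ} :
      ι n = some .store → μ p = some ⟨k, T₃⟩ →
      ¬ cacheIn κ (encOp .store) Tpc T₁ T₂ T₃ →
      CStep ι φ ⟨false, κ, μ, .data ⟨p, T₁⟩ :: .data ⟨m, T₂⟩ :: σ, ⟨n, Tpc⟩⟩ none
                ⟨true, installCache κ (encOp .store) Tpc T₁ T₂ T₃, μ,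
                 .ret ⟨n, Tpc⟩ false :: .data ⟨p, T₁⟩ :: .data ⟨m, T₂⟩ :: σ, ⟨0, TD⟩⟩
  | jumpM {κ μ : ℤ → Option CAtom} {σ : List CStkElt} {n n' Tpc T₁ : ℤ} :
      ι n = some .jump → ¬ cacheIn κ (encOp .jump) Tpc T₁ TD TD →
      CStep ι φ ⟨false, κ, μ, .data ⟨n', T₁⟩ :: σ, ⟨n, Tpc⟩⟩ none
                ⟨true, installCache κ (encOp .jump) Tpc T₁ TD TD, μ,
                 .ret ⟨n, Tpc⟩ false :: .data ⟨n', T₁⟩ :: σ, ⟨0, TD⟩⟩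
  | bnzM {κ μ : ℤ → Option CAtom} {σ : List CStkElt} {n m k Tpc T₁ : ℤ} :
      ι n = some (.bnz k) → ¬ cacheIn κ (encOp .bnz) Tpc T₁ TD TD →
      CStep ι φ ⟨false, κ, μ, .data ⟨m, T₁⟩ :: σ, ⟨n, Tpc⟩⟩ none
                ⟨true, installCache κ (encOp .bnz) Tpc T₁ TD TD, μ,
                 .ret ⟨n, Tpc⟩ false :: .data ⟨m, T₁⟩ :: σ, ⟨0, TD⟩⟩
  | callM {κ μ : ℤ → Option CAtom} {σ : List CStkElt} {n n' Tpc T₁ : ℤ} :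
      ι n = some .call → ¬ cacheIn κ (encOp .call) Tpc T₁ TD TD →
      CStep ι φ ⟨false, κ, μ, .data ⟨n', T₁⟩ :: σ, ⟨n, Tpc⟩⟩ none
                ⟨true, installCache κ (encOp .call) Tpc T₁ TD TD, μ,
                 .ret ⟨n, Tpc⟩ false :: .data ⟨n', T₁⟩ :: σ, ⟨0, TD⟩⟩
  | retM {κ μ : ℤ → Option CAtom} {σ : List CStkElt} {n m Tpc T₁ : ℤ} :
      ι n = some .ret → ¬ cacheIn κ (encOp .ret) Tpc T₁ TD TD →
      CStep ι φ ⟨false, κ, μ, .ret ⟨m, T₁⟩ false :: σ, ⟨n, Tpc⟩⟩ none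
                ⟨true, installCache κ (encOp .ret) Tpc T₁ TD TD, μ,
                 .ret ⟨n, Tpc⟩ false :: .ret ⟨m, T₁⟩ false :: σ, ⟨0, TD⟩⟩
  | outputM {κ μ : ℤ → Option CAtom} {σ : List CStkElt} {n m Tpc T₁ : ℤ} :
      ι n = some .output → ¬ cacheIn κ (encOp .output) Tpc T₁ TD TD →
      CStep ι φ ⟨false, κ, μ, .data ⟨m, T₁⟩ :: σ, ⟨n, Tpc⟩⟩ none
                ⟨true, installCache κ (encOp .output) Tpc T₁ TD TD, μ,
                 .ret ⟨n, Tpc⟩ false :: .data ⟨m, T₁⟩ :: σ, ⟨0, TD⟩⟩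
  -- kernel mode
  | addK {κ μ : ℤ → Option CAtom} {σ : List CStkElt} {n t v₁ t₁ v₂ t₂ : ℤ} :
      φ n = some .add →
      CStep ι φ ⟨true, κ, μ, .data ⟨v₁, t₁⟩ :: .data ⟨v₂, t₂⟩ :: σ, ⟨n, t⟩⟩ none
                ⟨true, κ, μ, .data ⟨v₁ + v₂, TD⟩ :: σ, ⟨n + 1, TD⟩⟩
  | pushK {κ μ : ℤ → Option CAtom} {σ : List CStkElt} {n m t : ℤ} :
      φ n = some (.push m) →
      CStep ι φ ⟨true, κ, μ, σ, ⟨n, t⟩⟩ none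
                ⟨true, κ, μ, .data ⟨m, TD⟩ :: σ, ⟨n + 1, TD⟩⟩
  | loadK {κ μ : ℤ → Option CAtom} {σ : List CStkElt} {n p tp t : ℤ} {a : CAtom} :
      φ n = some .load → κ p = some a →
      CStep ι φ ⟨true, κ, μ, .data ⟨p, tp⟩ :: σ, ⟨n, t⟩⟩ none
                ⟨true, κ, μ, .data a :: σ, ⟨n + 1, TD⟩⟩
  | storeK {κ μ : ℤ → Option CAtom} {σ : List CStkElt} {n p tp t : ℤ} {a : CAtom} :
      φ n = some .store →
      CStep ι φ ⟨true, κ, μ, .data ⟨p, tp⟩ :: .data a :: σ, ⟨n, t⟩⟩ none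
                ⟨true, updC κ p a, μ, σ, ⟨n + 1, TD⟩⟩
  | jumpK {κ μ : ℤ → Option CAtom} {σ : List CStkElt} {n n' t' t : ℤ} :
      φ n = some .jump →
      CStep ι φ ⟨true, κ, μ, .data ⟨n', t'⟩ :: σ, ⟨n, t⟩⟩ none
                ⟨true, κ, μ, σ, ⟨n', TD⟩⟩
  | bnzK {κ μ : ℤ → Option CAtom} {σ : List CStkElt} {n m k t' t : ℤ} :
      φ n = some (.bnz k) →
      CStep ι φ ⟨true, κ, μ, .data ⟨m, t'⟩ :: σ, ⟨n, t⟩⟩ none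
                ⟨true, κ, μ, σ, ⟨n + (if m = 0 then 1 else k), TD⟩⟩
  | callK {κ μ : ℤ → Option CAtom} {σ : List CStkElt} {n n' t' t : ℤ} :
      φ n = some .call →
      CStep ι φ ⟨true, κ, μ, .data ⟨n', t'⟩ :: σ, ⟨n, t⟩⟩ none
                ⟨true, κ, μ, .ret ⟨n + 1, TD⟩ true :: σ, ⟨n', TD⟩⟩
  | retK {κ μ : ℤ → Option CAtom} {σ : List CStkElt} {n t : ℤ} {a : CAtom} {π : Bool} :
      φ n = some .ret →
      CStep ι φ ⟨true, κ, μ, .ret a π :: σ, ⟨n, t⟩⟩ none ⟨π, κ, μ, σ, a⟩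

/-! ### Structured code generators and the IFC fault handler -/

def genFalse : List Instr := [.push 0]
def genTrue : List Instr := [.push 1]
def genSkipIf (n : ℕ) : List Instr := [.bnz ((n : ℤ) + 1)]
def genSkip (n : ℕ) : List Instr := genTrue ++ genSkipIf n
def genIf (t f : List Instr) : List Instr :=
  genSkipIf (f ++ genSkip t.length).length ++ (f ++ genSkip t.length) ++ t
def genLoadFrom (p : ℤ) : List Instr := [.push p, .load]
def genStoreAt (p : ℤ) : List Instr := [.push p, .store]
def genNot : List Instr := genIf genFalse genTrue
def genSome (c : List Instr) : List Instr := c ++ genTrue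
def genNone : List Instr := genFalse

/-- Addresses of the tags in the rule cache. -/
def addrOpLabel : ℤ := 0
def addrTagPC : ℤ := 1
def addrTag1 : ℤ := 2
def addrTag2 : ℤ := 3
def addrTag3 : ℤ := 4
def addrTagRpc : ℤ := 5
def addrTagR : ℤ := 6

/-- Compilation of label expressions, parameterized by the lattice-specific
generators `gb` (bottom) and `gj` (join). -/
def genELab (gb gj : List Instr) : LExpr → List Instr
  | .bot => gb
  | .labPC => genLoadFrom addrTagPC
  | .lab1 => genLoadFrom addrTag1
  | .lab2 => genLoadFrom addrTag2
  | .lab3 => genLoadFrom addrTag3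
  | .join e₁ e₂ => genELab gb gj e₂ ++ genELab gb gj e₁ ++ gj

/-- Compilation of boolean expressions, additionally parameterized by the
lattice-specific generator `gf` (flows). -/
def genBoolE (gb gj gf : List Instr) : BExpr → List Instr
  | .tru => genTrue
  | .flows e₁ e₂ => genELab gb gj e₂ ++ genELab gb gj e₁ ++ gf

/-- Compilation of a symbolic IFC rule. -/
def genApplyRule (gb gj gf : List Instr) (r : SRule) : List Instr :=
  genBoolE gb gj gf r.allow ++
  genIf (genSome (genELab gb gj r.rpc ++ genELab gb gj r.res)) genNone

/-- Guard generator: test whether the cache opcode equals (the encoding of) the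
given opcode. -/
def genMatchOp (op : Opcode) : List Instr :=
  [.push (-(encOp op))] ++ genLoadFrom addrOpLabel ++ [.add] ++ genNot

/-- All the opcodes. -/
def opcodes : List Opcode :=
  [.add, .output, .push, .load, .store, .jump, .bnz, .call, .ret]

/-- Nested case dispatch. -/
def genIndexedCases (genDefault : List Instr) (genGuard genBody : Opcode → List Instr) :
    List Opcode → List Instr
  | [] => genDefault
  | op :: ops => genGuard op ++ genIf (genBody op) (genIndexedCases genDefault genGuard genBody ops)

/-- First phase of the fault handler: dispatch on the opcode and apply the
corresponding symbolic rule. -/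
def genComputeResults (gb gj gf : List Instr) (R : RuleTable) : List Instr :=
  genIndexedCases [] genMatchOp (fun op => genApplyRule gb gj gf (R op)) opcodes

/-- Second phase of the fault handler: store the computed result tags into the
output part of the rule cache. -/
def genStoreResults : List Instr :=
  genIf (genStoreAt addrTagR ++ genStoreAt addrTagRpc ++ genTrue) genFalse

/-- The generated IFC fault handler. -/
def genFaultHandler (gb gj gf : List Instr) (R : RuleTable) : List Instr :=
  genComputeResults gb gj gf R ++ genStoreResults ++
  genIf [.ret] [.push (-1), .jump]

/-! ### Kernel-mode runs and Hoare triples -/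

/-- `PrivSteps ι φ s₁ s₂`: the machine runs from `s₁` to `s₂`, all states
strictly preceding `s₂` being in kernel mode (all such steps are silent). -/
inductive PrivSteps (ι φ : InstrMem) : CState → CState → Prop
  | refl (s : CState) : PrivSteps ι φ s s
  | step {s₁ s₂ s₃ : CState} :
      s₁.priv = true → CStep ι φ s₁ none s₂ → PrivSteps ι φ s₂ s₃ →
      PrivSteps ι φ s₁ s₃

/-- `codeAt φ n c`: the instruction memory `φ` contains the code sequence `c`
starting at address `n`. -/
def codeAt (φ : InstrMem) (n : ℤ) (c : List Instr) : Prop :=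
  ∀ i : ℕ, i < c.length → φ (n + (i : ℤ)) = (c)[i]?

/-- Total-correctness Hoare triple for self-contained kernel code: if `φ`
contains `c` at the current pc and the kernel memory and stack satisfy `P`,
then the machine runs in kernel mode to the end of `c` with kernel memory and
stack satisfying `Q` (the user memory is untouched). -/
def HT (c : List Instr) (P Q : (ℤ → Option CAtom) → List CStkElt → Prop) : Prop :=
  ∀ (ι φ : InstrMem) (n : ℤ) (κ μ : ℤ → Option CAtom) (σ : List CStkElt),
    codeAt φ n c → P κ σ →
    ∃ κ' σ', Q κ' σ' ∧
      PrivSteps ι φ ⟨true, κ, μ, σ, ⟨n, TD⟩⟩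
                    ⟨true, κ', μ, σ', ⟨n + (c.length : ℤ), TD⟩⟩

/-! ### Concrete lattices -/

/-- A concrete lattice: an encoding of the labels of `L` as integer tags,
together with code sequences correctly implementing `⊥`, `⊔` and the test `≤`
on encoded tags (specified by total-correctness Hoare triples in
weakest-precondition style). -/
structure ConcreteLattice (L : Type) [SemilatticeSup L] [OrderBot L] where
  Tag : L → ℤ
  Lab : ℤ → L
  labTag : ∀ l : L, Lab (Tag l) = l
  genBot : List Instr
  genJoin : List Instr
  genFlows : List Instr
  botSpec : ∀ P : (ℤ → Option CAtom) → List CStkElt → Prop,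
    HT genBot (fun κ σ => P κ (.data ⟨Tag ⊥, TD⟩ :: σ)) P
  joinSpec : ∀ P : (ℤ → Option CAtom) → List CStkElt → Prop,
    HT genJoin
      (fun κ σ => ∃ (l₁ l₂ : L) (σ₀ : List CStkElt),
        σ = .data ⟨Tag l₁, TD⟩ :: .data ⟨Tag l₂, TD⟩ :: σ₀ ∧
        P κ (.data ⟨Tag (l₁ ⊔ l₂), TD⟩ :: σ₀)) P
  flowsSpec : ∀ P : (ℤ → Option CAtom) → List CStkElt → Prop,
    HT genFlows
      (fun κ σ => ∃ (l₁ l₂ : L) (σ₀ : List CStkElt),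
        σ = .data ⟨Tag l₁, TD⟩ :: .data ⟨Tag l₂, TD⟩ :: σ₀ ∧
        ∀ b : ℤ, (b ≠ 0 ↔ l₁ ≤ l₂) → P κ (.data ⟨b, TD⟩ :: σ₀)) P

section Concrete

variable {L : Type} [SemilatticeSup L] [OrderBot L]

/-- The IFC fault handler compiled from a rule table, using the code generators
of a concrete lattice. -/
def faultHandler (CL : ConcreteLattice L) (R : RuleTable) : List Instr :=
  genFaultHandler CL.genBot CL.genJoin CL.genFlows R

/-- The kernel instruction memory consisting of exactly the compiled fault
handler, installed starting at address 0. -/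
def handlerMem (CL : ConcreteLattice L) (R : RuleTable) : InstrMem :=
  fun q => if 0 ≤ q then (faultHandler CL R)[q.toNat]? else none

/-! ### The concrete machine as a generic machine, and matching relations -/

/-- Input data for the concrete machine. -/
structure CInput : Type where
  prog : InstrMem
  args : List CAtom
  size : ℕ
  tag : ℤ

/-- The initial rule cache, holding an illegal opcode so that the first user
instruction always faults. -/
def initCache : ℤ → Option CAtom :=
  fun q => if 0 ≤ q ∧ q ≤ 6 then some ⟨if q = 0 then -1 else TD, TD⟩ else none

/-- The initial state of the concrete machine: user mode, cache initialized
with an illegal opcode, user memory of `size` copies of `0 @ tag`, stack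
holding the arguments, pc `0 @ tag`. -/
def cInit (i : CInput) : InstrMem × CState :=
  (i.prog,
   ⟨false, initCache,
    fun q => if 0 ≤ q ∧ q < (i.size : ℤ) then some ⟨0, i.tag⟩ else none,
    i.args.map .data, ⟨0, i.tag⟩⟩)

/-- The concrete machine step relation as a generic machine step, with the
user program part of the state and the kernel memory `φ` fixed. -/
def CStepP (φ : InstrMem) :
    (InstrMem × CState) → Option CAtom → (InstrMem × CState) → Prop :=
  fun s α s' => s'.1 = s.1 ∧ CStep s.1 φ s.2 α s'.2

/-- Matching of events/atoms: the concrete atom is the `Tag`-image of the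
abstract one. -/
def matchAtomC (CL : ConcreteLattice L) (a : Atom L) (c : CAtom) : Prop :=
  c = ⟨a.val, CL.Tag a.lab⟩

/-- Matching of inputs: same program and memory size, tag-encoded arguments and
initial label. -/
def matchInputC (CL : ConcreteLattice L) (i : AInput L) (ic : CInput) : Prop :=
  ic.prog = i.prog ∧
  ic.args = i.args.map (fun a => ⟨a.val, CL.Tag a.lab⟩) ∧
  ic.size = i.size ∧ ic.tag = CL.Tag i.lab

/-- Matching of stack elements: data matches data, return frames match return
frames with the user privilege bit, componentwise `Tag`-encoded. -/
inductive MatchStk (CL : ConcreteLattice L) : StkElt L → CStkElt → Prop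
  | data {a : Atom L} {c : CAtom} :
      matchAtomC CL a c → MatchStk CL (.data a) (.data c)
  | ret {a : Atom L} {c : CAtom} :
      matchAtomC CL a c → MatchStk CL (.ret a) (.ret c false)

/-- Cache consistency `𝓡 ⊢ κ`: the rule cache never lies with respect to the
rule table `R`. -/
def CacheConsistent (CL : ConcreteLattice L) (R : RuleTable)
    (κ : ℤ → Option CAtom) : Prop :=
  ∀ (op : Opcode) (Lpc L₁ L₂ L₃ : L),
    cacheIn κ (encOp op) (CL.Tag Lpc) (CL.Tag L₁) (CL.Tag L₂) (CL.Tag L₃) →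
    ∃ Lrpc Lr : L, Judge R (Lpc, L₁, L₂, L₃) op Lrpc Lr ∧
      cacheOut κ (CL.Tag Lrpc) (CL.Tag Lr)

/-- Matching of symbolic-rule-machine states and concrete states (`≈ˢᶜ`). -/
def MatchState (CL : ConcreteLattice L) (R : RuleTable)
    (qs : AState L) (cs : CState) : Prop :=
  cs.priv = false ∧
  CacheConsistent CL R cs.kmem ∧
  (∀ p, Option.Rel (matchAtomC CL) (qs.mem p) (cs.umem p)) ∧
  List.Forall₂ (MatchStk CL) qs.stk cs.stk ∧
  cs.pc = ⟨qs.pc.val, CL.Tag qs.pc.lab⟩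

end Concrete

/-!
The handler is straight-line code with forward branches only, so it is verified by composing
exact kernel runs of its blocks. The opcode dispatch falls through to the compiled rule for the
faulting opcode; there the allow test succeeds because the judgment holds, and the compiled label
expressions leave the tags of `Lrpc` and `Lr` on the stack, by the specifications of the lattice
code. The store phase writes them into the cache output and the success branch of the final test
returns through the saved user frame.
-/

theorem PrivSteps.trans {ι φ : InstrMem} {s₁ s₂ s₃ : CState}
    (h₁ : PrivSteps ι φ s₁ s₂) (h₂ : PrivSteps ι φ s₂ s₃) : PrivSteps ι φ s₁ s₃ := by
  induction h₁ with
  | refl => exact h₂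
  | step hp hs _ ih => exact .step hp hs (ih h₂)

theorem codeAt_append {φ : InstrMem} {n : ℤ} {c₁ c₂ : List Instr} :
    codeAt φ n (c₁ ++ c₂) ↔ codeAt φ n c₁ ∧ codeAt φ (n + c₁.length) c₂ := by
  constructor
  · intro h
    refine ⟨fun i hi => ?_, fun i hi => ?_⟩
    · simpa [List.getElem?_append_left hi] using h i (by simp; omega)
    · have hi' := h (c₁.length + i) (by simp; omega)
      rw [List.getElem?_append_right (by omega), Nat.add_sub_cancel_left] at hi'
      simpa [add_assoc] using hi'
  · rintro ⟨h₁, h₂⟩ i hi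
    rcases lt_or_ge i c₁.length with hi₁ | hi₁
    · simpa [List.getElem?_append_left hi₁] using h₁ i hi₁
    · obtain ⟨j, rfl⟩ := Nat.exists_eq_add_of_le hi₁
      rw [List.getElem?_append_right hi₁, Nat.add_sub_cancel_left]
      simpa [add_assoc] using h₂ j (by simp at hi; omega)

theorem codeAt_cons {φ : InstrMem} {n : ℤ} {i : Instr} {c : List Instr}
    (h : codeAt φ n (i :: c)) : φ n = some i ∧ codeAt φ (n + 1) c := by
  obtain ⟨hi, hc⟩ := codeAt_append.1 (show codeAt φ n ([i] ++ c) from h)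
  exact ⟨by simpa using hi 0, by simpa using hc⟩

theorem updC_comm {κ : ℤ → Option CAtom} {p q : ℤ} {a b : CAtom} (h : p ≠ q) :
    updC (updC κ p a) q b = updC (updC κ q b) p a := by
  funext x
  simp only [updC]
  split_ifs with hq hp <;> first | rfl | exact absurd (hp.symm.trans hq) h

theorem encOp_injective : Function.Injective encOp := by
  intro a b h
  cases a <;> cases b <;> first | rfl | simp [encOp] at h

theorem mem_opcodes (op : Opcode) : op ∈ opcodes := by
  cases op <;> simp [opcodes]

def Runs (c : List Instr) (κ : ℤ → Option CAtom) (σ : List CStkElt)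
    (κ' : ℤ → Option CAtom) (σ' : List CStkElt) : Prop :=
  ∀ (ι φ : InstrMem) (n : ℤ) (μ : ℤ → Option CAtom), codeAt φ n c →
    PrivSteps ι φ ⟨true, κ, μ, σ, ⟨n, TD⟩⟩ ⟨true, κ', μ, σ', ⟨n + c.length, TD⟩⟩

section Runs

variable {c c₁ c₂ t f : List Instr} {i : Instr} {κ κ' κ₁ : ℤ → Option CAtom}
  {σ σ' σ₁ : List CStkElt}

theorem Runs.append (h₁ : Runs c₁ κ σ κ₁ σ₁) (h₂ : Runs c₂ κ₁ σ₁ κ' σ') :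
    Runs (c₁ ++ c₂) κ σ κ' σ' := by
  intro ι φ n μ hc
  obtain ⟨hc₁, hc₂⟩ := codeAt_append.1 hc
  simpa [add_assoc] using (h₁ ι φ n μ hc₁).trans (h₂ ι φ _ μ hc₂)

theorem Runs.of_step
    (hstep : ∀ (ι φ : InstrMem) (n : ℤ) (μ : ℤ → Option CAtom), φ n = some i →
      CStep ι φ ⟨true, κ, μ, σ, ⟨n, TD⟩⟩ none ⟨true, κ', μ, σ', ⟨n + 1, TD⟩⟩) :
    Runs [i] κ σ κ' σ' := fun ι φ n μ hc =>
  by simpa using .step rfl (hstep ι φ n μ (codeAt_cons hc).1) (.refl _)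

theorem Runs.cons_jump
    (hstep : ∀ (ι φ : InstrMem) (n : ℤ) (μ : ℤ → Option CAtom), φ n = some i →
      CStep ι φ ⟨true, κ, μ, σ, ⟨n, TD⟩⟩ none ⟨true, κ', μ, σ', ⟨n + (c.length + 1), TD⟩⟩) :
    Runs (i :: c) κ σ κ' σ' := fun ι φ n μ hc =>
  by simpa [add_comm] using .step rfl (hstep ι φ n μ (codeAt_cons hc).1) (.refl _)

theorem Runs.push (m : ℤ) : Runs [.push m] κ σ κ (.data ⟨m, TD⟩ :: σ) :=
  of_step fun _ _ _ _ h => .pushK h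

theorem Runs.load {p tp : ℤ} {a : CAtom} (hp : κ p = some a) :
    Runs [.load] κ (.data ⟨p, tp⟩ :: σ) κ (.data a :: σ) :=
  of_step fun _ _ _ _ h => .loadK h hp

theorem Runs.store {p tp : ℤ} {a : CAtom} :
    Runs [.store] κ (.data ⟨p, tp⟩ :: .data a :: σ) (updC κ p a) σ :=
  of_step fun _ _ _ _ h => .storeK h

theorem Runs.add {v₁ t₁ v₂ t₂ : ℤ} :
    Runs [.add] κ (.data ⟨v₁, t₁⟩ :: .data ⟨v₂, t₂⟩ :: σ) κ (.data ⟨v₁ + v₂, TD⟩ :: σ) :=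
  of_step fun _ _ _ _ h => .addK h

theorem runs_genSkip_append : Runs (genSkip t.length ++ t) κ σ κ σ :=
  (Runs.push 1).append (Runs.cons_jump fun _ _ _ _ h => by simpa using CStep.bnzK (m := 1) h)

theorem runs_genIf {b tb : ℤ} (ht : b ≠ 0 → Runs t κ σ κ' σ') (hf : b = 0 → Runs f κ σ κ' σ') :
    Runs (genIf t f) κ (.data ⟨b, tb⟩ :: σ) κ' σ' := by
  by_cases hb : b = 0
  · subst hb
    rw [genIf, List.append_assoc, List.append_assoc]
    exact (Runs.of_step fun _ _ _ _ h => by simpa using CStep.bnzK (m := 0) h).append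
      ((hf rfl).append runs_genSkip_append)
  · exact (Runs.cons_jump fun _ _ _ _ h => by simpa [hb] using CStep.bnzK (m := b) h).append
      (ht hb)

theorem runs_genNot {b tb : ℤ} :
    Runs genNot κ (.data ⟨b, tb⟩ :: σ) κ (.data ⟨if b = 0 then 1 else 0, TD⟩ :: σ) :=
  runs_genIf (fun hb => by rw [if_neg hb]; exact Runs.push 0)
    (fun hb => by rw [if_pos hb]; exact Runs.push 1)

theorem runs_genMatchOp {op : Opcode} (hop : κ addrOpLabel = some ⟨encOp op, TD⟩)
    (op' : Opcode) :
    Runs (genMatchOp op') κ σ κ (.data ⟨if op = op' then 1 else 0, TD⟩ :: σ) := by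
  have h : Runs (genMatchOp op') κ σ κ
      (.data ⟨if encOp op + -encOp op' = 0 then 1 else 0, TD⟩ :: σ) :=
    (((Runs.push _).append ((Runs.push _).append (Runs.load hop))).append Runs.add).append
      runs_genNot
  simpa only [add_neg_eq_zero, encOp_injective.eq_iff] using h

theorem runs_genIndexedCases {op : Opcode} (hop : κ addrOpLabel = some ⟨encOp op, TD⟩)
    {default : List Instr} {body : Opcode → List Instr} (hbody : Runs (body op) κ σ κ' σ')
    {ops : List Opcode} (hmem : op ∈ ops) :
    Runs (genIndexedCases default genMatchOp body ops) κ σ κ' σ' := by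
  induction ops with
  | nil => cases hmem
  | cons op₀ ops ih =>
    refine (runs_genMatchOp hop op₀).append (runs_genIf (fun h => ?_) (fun h => ?_))
    · obtain rfl : op = op₀ := by by_contra hne; simp [hne] at h
      exact hbody
    · have hne : op ≠ op₀ := by rintro rfl; simp at h
      exact ih ((List.mem_cons.1 hmem).resolve_left hne)

theorem runs_genStoreResults {b tb : ℤ} {ar arpc : CAtom} (hb : b ≠ 0) :
    Runs genStoreResults κ (.data ⟨b, tb⟩ :: .data ar :: .data arpc :: σ)
      (updC (updC κ addrTagR ar) addrTagRpc arpc) (.data ⟨1, TD⟩ :: σ) :=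
  runs_genIf
    (fun _ => (((Runs.push _).append Runs.store).append ((Runs.push _).append Runs.store)).append
      (Runs.push 1))
    (absurd · hb)

theorem privSteps_genIf_ret {ι φ : InstrMem} {n b tb : ℤ} {μ : ℤ → Option CAtom} {pc : CAtom}
    {π : Bool} (hc : codeAt φ n (genIf [.ret] f)) (hb : b ≠ 0) :
    PrivSteps ι φ ⟨true, κ, μ, .data ⟨b, tb⟩ :: .ret pc π :: σ, ⟨n, TD⟩⟩ ⟨π, κ, μ, σ, pc⟩ := by
  obtain ⟨hbranch, hret⟩ := codeAt_append.1 hc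
  have hjump : Runs (genSkipIf (f ++ genSkip 1).length ++ (f ++ genSkip 1)) κ
      (.data ⟨b, tb⟩ :: .ret pc π :: σ) κ (.ret pc π :: σ) :=
    Runs.cons_jump fun _ _ _ _ h => by simpa [hb] using CStep.bnzK (m := b) h
  exact (hjump ι φ n μ hbranch).trans (.step rfl (.retK (codeAt_cons hret).1) (.refl _))

end Runs

theorem runs_of_HT {c : List Instr} {P : (ℤ → Option CAtom) → List CStkElt → Prop}
    {κ κ' : ℤ → Option CAtom} {σ σ' : List CStkElt} (h : HT c P fun k s => k = κ' ∧ s = σ')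
    (hP : P κ σ) : Runs c κ σ κ' σ' := by
  intro ι φ n μ hc
  obtain ⟨_, _, ⟨rfl, rfl⟩, hrun⟩ := h ι φ n κ μ σ hc hP
  exact hrun

section ConcreteLattice

variable {L : Type} [SemilatticeSup L] [OrderBot L] (CL : ConcreteLattice L)
  {t f : List Instr} {κ κ' : ℤ → Option CAtom} {σ σ' : List CStkElt}

theorem runs_genBot : Runs CL.genBot κ σ κ (.data ⟨CL.Tag ⊥, TD⟩ :: σ) :=
  runs_of_HT (CL.botSpec _) ⟨rfl, rfl⟩

theorem runs_genJoin (l₁ l₂ : L) :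
    Runs CL.genJoin κ (.data ⟨CL.Tag l₁, TD⟩ :: .data ⟨CL.Tag l₂, TD⟩ :: σ) κ
      (.data ⟨CL.Tag (l₁ ⊔ l₂), TD⟩ :: σ) :=
  runs_of_HT (CL.joinSpec _) ⟨l₁, l₂, σ, rfl, rfl, rfl⟩

/- `genFlows` is specified only up to whether its result is nonzero, so it is run together with
the branch that consumes that result. -/
theorem runs_genFlows_genIf {l₁ l₂ : L} (ht : l₁ ≤ l₂ → Runs t κ σ κ' σ')
    (hf : ¬ l₁ ≤ l₂ → Runs f κ σ κ' σ') :
    Runs (CL.genFlows ++ genIf t f) κ (.data ⟨CL.Tag l₁, TD⟩ :: .data ⟨CL.Tag l₂, TD⟩ :: σ)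
      κ' σ' := by
  intro ι φ n μ hc
  obtain ⟨hc₁, hc₂⟩ := codeAt_append.1 hc
  obtain ⟨_, _, ⟨b, hb, rfl, rfl⟩, hflows⟩ := CL.flowsSpec
    (fun k s => ∃ b : ℤ, (b ≠ 0 ↔ l₁ ≤ l₂) ∧ k = κ ∧ s = .data ⟨b, TD⟩ :: σ) ι φ n κ μ _ hc₁
    ⟨l₁, l₂, σ, rfl, fun b hb => ⟨b, hb, rfl, rfl⟩⟩
  have hif := runs_genIf (tb := TD) (fun h => ht (hb.1 h)) (fun h => hf (by simp [← hb, h]))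
    ι φ _ μ hc₂
  simpa [add_assoc] using hflows.trans hif

variable {o : ℤ} {Lpc ℓ₁ ℓ₂ ℓ₃ : L}

theorem runs_genELab (hin : cacheIn κ o (CL.Tag Lpc) (CL.Tag ℓ₁) (CL.Tag ℓ₂) (CL.Tag ℓ₃))
    (e : LExpr) :
    Runs (genELab CL.genBot CL.genJoin e) κ σ κ
      (.data ⟨CL.Tag (evalL (Lpc, ℓ₁, ℓ₂, ℓ₃) e), TD⟩ :: σ) := by
  induction e generalizing σ with
  | bot => exact runs_genBot CL
  | labPC => exact (Runs.push _).append (Runs.load hin.2.1)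
  | lab1 => exact (Runs.push _).append (Runs.load hin.2.2.1)
  | lab2 => exact (Runs.push _).append (Runs.load hin.2.2.2.1)
  | lab3 => exact (Runs.push _).append (Runs.load hin.2.2.2.2)
  | join e₁ e₂ ih₁ ih₂ => exact (ih₂.append ih₁).append (runs_genJoin CL _ _)

theorem runs_genBoolE_genIf (hin : cacheIn κ o (CL.Tag Lpc) (CL.Tag ℓ₁) (CL.Tag ℓ₂) (CL.Tag ℓ₃))
    (be : BExpr) (ht : evalB (Lpc, ℓ₁, ℓ₂, ℓ₃) be → Runs t κ σ κ' σ')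
    (hf : ¬ evalB (Lpc, ℓ₁, ℓ₂, ℓ₃) be → Runs f κ σ κ' σ') :
    Runs (genBoolE CL.genBot CL.genJoin CL.genFlows be ++ genIf t f) κ σ κ' σ' := by
  cases be with
  | tru => exact (Runs.push 1).append (runs_genIf (fun _ => ht trivial) (absurd · one_ne_zero))
  | flows e₁ e₂ =>
    rw [genBoolE, List.append_assoc, List.append_assoc]
    exact (runs_genELab CL hin e₂).append
      ((runs_genELab CL hin e₁).append (runs_genFlows_genIf CL ht hf))

theorem runs_genApplyRule
    (hin : cacheIn κ o (CL.Tag Lpc) (CL.Tag ℓ₁) (CL.Tag ℓ₂) (CL.Tag ℓ₃)) {R : RuleTable}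
    {op : Opcode} {Lrpc Lr : L} (hjudge : Judge R (Lpc, ℓ₁, ℓ₂, ℓ₃) op Lrpc Lr) :
    Runs (genApplyRule CL.genBot CL.genJoin CL.genFlows (R op)) κ σ κ
      (.data ⟨1, TD⟩ :: .data ⟨CL.Tag Lr, TD⟩ :: .data ⟨CL.Tag Lrpc, TD⟩ :: σ) := by
  obtain ⟨hallow, rfl, rfl⟩ := hjudge
  exact runs_genBoolE_genIf CL hin _
    (fun _ => ((runs_genELab CL hin _).append (runs_genELab CL hin _)).append (Runs.push 1))
    (absurd hallow)

end ConcreteLattice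

/-- Fault handler correctness, allowed case: if the symbolic
IFC enforcement judgment allows the faulting instruction and the cache input
holds the corresponding opcode and tag-encoded labels, then the generated fault
handler runs entirely in kernel mode, writes the tag encodings of the result
labels into the cache output, and returns to user mode at the saved pc with the
original stack and user memory. -/
theorem fault_handler_correct_allowed {L : Type} [SemilatticeSup L] [OrderBot L]
    (CL : ConcreteLattice L) (R : RuleTable) (ι φ : InstrMem)
    (hφ : codeAt φ 0 (faultHandler CL R))
    (op : Opcode) (Lpc ℓ₁ ℓ₂ ℓ₃ Lrpc Lr : L)
    (hjudge : Judge R (Lpc, ℓ₁, ℓ₂, ℓ₃) op Lrpc Lr)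
    (κ μ : ℤ → Option CAtom) (σ : List CStkElt) (pc : CAtom)
    (hin : cacheIn κ (encOp op) (CL.Tag Lpc) (CL.Tag ℓ₁) (CL.Tag ℓ₂) (CL.Tag ℓ₃)) :
    PrivSteps ι φ
      ⟨true, κ, μ, .ret pc false :: σ, ⟨0, TD⟩⟩
      ⟨false, updC (updC κ addrTagRpc ⟨CL.Tag Lrpc, TD⟩) addrTagR ⟨CL.Tag Lr, TD⟩,
       μ, σ, pc⟩ := by
  obtain ⟨hcode, hreturn⟩ := codeAt_append.1 hφ
  have hcompute : Runs (genComputeResults CL.genBot CL.genJoin CL.genFlows R) κ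
      (.ret pc false :: σ) κ
      (.data ⟨1, TD⟩ :: .data ⟨CL.Tag Lr, TD⟩ :: .data ⟨CL.Tag Lrpc, TD⟩ :: .ret pc false :: σ) :=
    runs_genIndexedCases hin.1 (runs_genApplyRule CL hin hjudge) (mem_opcodes op)
  rw [updC_comm (by decide : addrTagRpc ≠ addrTagR)]
  exact ((hcompute.append (runs_genStoreResults one_ne_zero)) ι φ 0 μ hcode).trans
    (privSteps_genIf_ret hreturn one_ne_zero)
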